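/- (Dr. GRPO decomposition.) Let Ω, r, p, μ⁺, μ⁻, μ, ρ be as in the mixture setup, let Â(o) = 1−p if r o = true and Â(o) = −p otherwise, and let ε ≥ 0. Define s⁺(o) = Σ_{x ∈ ρ o} min(x, 1+ε), s⁻(o) = Σ_{x ∈ ρ o} max(x, 1−ε), and G(o) = Σ_{x ∈ ρ o} min(x·Â(o), clip(x, 1−ε, 1+ε)·Â(o)). If G is μ-integrable, s⁺ is μ⁺-integrable and s⁻ is μ⁻-integrable, then ∫ G dμ = p(1−p) · ( ∫ s⁺ dμ⁺ − ∫ s⁻ dμ⁻ ). -/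

import Mathlib

/-!
On a rewarded output the advantage is `1 - p ≥ 0`, so every token term
`min (x Â) (clip x (1-ε) (1+ε) Â)` equals `Â · min x (1+ε)`; on an unrewarded output it is
`-p ≤ 0` and the term equals `Â · max x (1-ε)`. Hence `G = (1-p) s⁺` holds `μ⁺`-a.e. and
`G = -p s⁻` holds `μ⁻`-a.e., and integrating over the mixture gives
`p (1-p) ∫ s⁺ dμ⁺ + (1-p)(-p) ∫ s⁻ dμ⁻`.
-/

open MeasureTheory

/-- The clipping operator used in PPO-style RL objectives. -/
noncomputable def clip (x a b : ℝ) : ℝ := max a (min x b)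

section Clip

variable {x a b A : ℝ}

lemma min_clip (hab : a ≤ b) : min x (clip x a b) = min x b := by
  unfold clip
  rcases le_total x a with h | h <;> rcases le_total x b with h' | h' <;>
    simp only [min_def, max_def] <;> split_ifs <;> linarith

lemma max_clip (hab : a ≤ b) : max x (clip x a b) = max x a := by
  unfold clip
  rcases le_total x a with h | h <;> rcases le_total x b with h' | h' <;>
    simp only [min_def, max_def] <;> split_ifs <;> linarith

lemma min_mul_clip_mul_of_nonneg (hab : a ≤ b) (hA : 0 ≤ A) :
    min (x * A) (clip x a b * A) = min x b * A := by
  rw [← min_mul_of_nonneg _ _ hA, min_clip hab]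

lemma min_mul_clip_mul_of_nonpos (hab : a ≤ b) (hA : A ≤ 0) :
    min (x * A) (clip x a b * A) = max x a * A := by
  rw [← (antitone_mul_right hA).map_max, max_clip hab]

lemma sum_map_min_mul_clip_mul_of_nonneg (l : List ℝ) (hab : a ≤ b) (hA : 0 ≤ A) :
    (l.map fun x => min (x * A) (clip x a b * A)).sum = A * (l.map fun x => min x b).sum := by
  rw [List.map_congr_left fun x _ => min_mul_clip_mul_of_nonneg hab hA,
    List.sum_map_mul_right, mul_comm]

lemma sum_map_min_mul_clip_mul_of_nonpos (l : List ℝ) (hab : a ≤ b) (hA : A ≤ 0) :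
    (l.map fun x => min (x * A) (clip x a b * A)).sum = A * (l.map fun x => max x a).sum := by
  rw [List.map_congr_left fun x _ => min_mul_clip_mul_of_nonpos hab hA,
    List.sum_map_mul_right, mul_comm]

end Clip

section Mixture

variable {α E : Type*} [MeasurableSpace α] [NormedAddCommGroup E] [NormedSpace ℝ E]
  {μ ν : Measure α}

lemma integral_ofReal_smul_add_ofReal_smul {f : α → E} {a b : ℝ} (ha : 0 ≤ a) (hb : 0 ≤ b)
    (hf : Integrable f (ENNReal.ofReal a • μ + ENNReal.ofReal b • ν)) :
    ∫ x, f x ∂(ENNReal.ofReal a • μ + ENNReal.ofReal b • ν) =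
      a • ∫ x, f x ∂μ + b • ∫ x, f x ∂ν := by
  rw [integrable_add_measure] at hf
  rw [integral_add_measure hf.1 hf.2, integral_smul_measure, integral_smul_measure,
    ENNReal.toReal_ofReal ha, ENNReal.toReal_ofReal hb]

lemma ae_of_measure_setOf_eq_one [IsProbabilityMeasure μ] {P : α → Prop}
    (hP : MeasurableSet {x | P x}) (h : μ {x | P x} = 1) : ∀ᵐ x ∂μ, P x :=
  (ae_iff_measure_eq hP.nullMeasurableSet).2 (by rw [h, measure_univ])

end Mixture

theorem stmt_8_general {Ω : Type*} [MeasurableSpace Ω]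
    (r : Ω → Bool) (hr : Measurable r)
    (p : ℝ) (hp : p ∈ Set.Ioo (0 : ℝ) 1)
    (μpos μneg : Measure Ω) [IsProbabilityMeasure μpos] [IsProbabilityMeasure μneg]
    (hpos : μpos {o | r o = true} = 1) (hneg : μneg {o | r o = false} = 1)
    (μ : Measure Ω)
    (hμ : μ = ENNReal.ofReal p • μpos + ENNReal.ofReal (1 - p) • μneg)
    (Ahat : Ω → ℝ)
    (hAhat : ∀ o, Ahat o = if r o then 1 - p else -p)
    (ε : ℝ) (hε : 0 ≤ ε)
    (ρ : Ω → List ℝ)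
    (sp sm G : Ω → ℝ)
    (hsp : ∀ o, sp o = ((ρ o).map (fun x => min x (1 + ε))).sum)
    (hsm : ∀ o, sm o = ((ρ o).map (fun x => max x (1 - ε))).sum)
    (hG : ∀ o, G o =
      ((ρ o).map (fun x => min (x * Ahat o) (clip x (1 - ε) (1 + ε) * Ahat o))).sum)
    (hGint : Integrable G μ) :
    ∫ o, G o ∂μ =
      p * (1 - p) * ((∫ o, sp o ∂μpos) - ∫ o, sm o ∂μneg) := by
  obtain ⟨hp0, hp1⟩ := hp
  have hab : 1 - ε ≤ 1 + ε := by linarith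
  have hGpos : ∀ᵐ o ∂μpos, G o = (1 - p) * sp o := by
    filter_upwards [ae_of_measure_setOf_eq_one (hr (measurableSet_singleton true)) hpos]
      with o (ho : r o = true)
    rw [hG, hsp, hAhat, if_pos ho]
    exact sum_map_min_mul_clip_mul_of_nonneg _ hab (by linarith)
  have hGneg : ∀ᵐ o ∂μneg, G o = -p * sm o := by
    filter_upwards [ae_of_measure_setOf_eq_one (hr (measurableSet_singleton false)) hneg]
      with o (ho : r o = false)
    rw [hG, hsm, hAhat, ho, if_neg Bool.false_ne_true]
    exact sum_map_min_mul_clip_mul_of_nonpos _ hab (by linarith)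
  subst hμ
  rw [integral_ofReal_smul_add_ofReal_smul hp0.le (by linarith) hGint,
    integral_congr_ae hGpos, integral_congr_ae hGneg, integral_const_mul, integral_const_mul,
    smul_eq_mul, smul_eq_mul]
  ring

theorem stmt_8 {Ω : Type*} [MeasurableSpace Ω]
    (r : Ω → Bool) (hr : Measurable r)
    (p : ℝ) (hp : p ∈ Set.Ioo (0 : ℝ) 1)
    (μpos μneg : Measure Ω) [IsProbabilityMeasure μpos] [IsProbabilityMeasure μneg]
    (hpos : μpos {o | r o = true} = 1) (hneg : μneg {o | r o = false} = 1)
    (μ : Measure Ω)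
    (hμ : μ = ENNReal.ofReal p • μpos + ENNReal.ofReal (1 - p) • μneg)
    (Ahat : Ω → ℝ)
    (hAhat : ∀ o, Ahat o = if r o then 1 - p else -p)
    (ε : ℝ) (hε : 0 ≤ ε)
    (ρ : Ω → List ℝ) (hρ : ∀ o, ρ o ≠ [])
    (sp sm G : Ω → ℝ)
    (hsp : ∀ o, sp o = ((ρ o).map (fun x => min x (1 + ε))).sum)
    (hsm : ∀ o, sm o = ((ρ o).map (fun x => max x (1 - ε))).sum)
    (hG : ∀ o, G o =
      ((ρ o).map (fun x => min (x * Ahat o) (clip x (1 - ε) (1 + ε) * Ahat o))).sum)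
    (hGint : Integrable G μ) (hspint : Integrable sp μpos) (hsmint : Integrable sm μneg) :
    ∫ o, G o ∂μ =
      p * (1 - p) * ((∫ o, sp o ∂μpos) - ∫ o, sm o ∂μneg) :=
  stmt_8_general r hr p hp μpos μneg hpos hneg μ hμ Ahat hAhat ε hε ρ sp sm G hsp hsm hG hGint
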